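/- arXiv:1511.07505 — 6 statements merged into one kernel-verified Lean document; each statement's English description precedes it below -/
import Mathlib

section
/- Let X and Y be nonzero complex Banach spaces, let S₁, T₁ ∈ B(X) and S₂, T₂ ∈ B(Y), and let n ≥ 1. Then β_n(S₁⊗S₂, T₁⊗T₂) = 0 in the algebraic tensor product B(X) ⊗ B(Y) if and only if there exist positive integers l, m with l + m = n + 1 and a nonzero complex number λ such that β_l(S₁, λT₁) = 0 in B(X) and β_m(S₂, (1/λ)T₂) = 0 in B(Y). (That is, S₁⊗S₂ is a left n-inverse of T₁⊗T₂ if and only if S₁ is a left l-inverse of λT₁ and S₂ is a left m-inverse of (1/λ)T₂.) -/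
/-!
Write `Φ_{S,T} a = S a T`. Then `β_n(S,T) = (Φ_{S,T} - 1)ⁿ 1` and
`Φ_{S₁⊗S₂,T₁⊗T₂} = Φ_{S₁,T₁} ⊗ Φ_{S₂,T₂}`, so the question is when `(F ⊗ G - 1)ⁿ (u ⊗ w) = 0`
for endomorphisms `F`, `G` and nonzero vectors `u`, `w`.

Contracting with a functional `ψ`, `ψ w = 1`, shows that some nonzero polynomial in `F`
kills `u`. Take one, `p`, of least degree; for every root `β` of `p`, `v = (p / (X - β))(F) u`
is then a nonzero `β`-eigenvector of `F`, and `(F ⊗ G - 1)ⁿ (v ⊗ w) = v ⊗ (β G - 1)ⁿ w` makes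
`w` a generalized eigenvector of `G` for `β⁻¹`. Generalized eigenspaces for distinct eigenvalues are
disjoint, so `p` has a single root and `u` is a generalized eigenvector of `F` for `β`.
After rescaling `F` by `β⁻¹` and `G` by `β`, both `F - 1` and `G - 1` act nilpotently on `u` and
`w`, of orders `l` and `m`, and the binomial expansion of
`(F ⊗ G - 1)^N = ((F - 1) ⊗ G + 1 ⊗ (G - 1))^N` shows that the least `N` killing `u ⊗ w`
is `l + m - 1`, since in characteristic zero the one surviving binomial coefficient is nonzero.
-/

open scoped TensorProduct

/-- `β_n(S,T) = Σ_{k=0}^n (−1)^{n−k} C(n,k) S^k T^k`. -/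
noncomputable def beta {A : Type*} [Ring A] (n : ℕ) (S T : A) : A :=
  ∑ k ∈ Finset.range (n + 1), ((-1 : ℤ) ^ (n - k) * (n.choose k : ℤ)) • (S ^ k * T ^ k)

open TensorProduct
open scoped Polynomial
open Polynomial (aeval X C)

lemma sub_one_pow_eq_sum {A : Type*} [Ring A] (x : A) (n : ℕ) :
    (x - 1) ^ n =
      ∑ k ∈ Finset.range (n + 1), ((-1 : ℤ) ^ (n - k) * (n.choose k : ℤ)) • x ^ k := by
  rw [sub_eq_add_neg, (Commute.neg_one_right x).add_pow]
  refine Finset.sum_congr rfl fun k _ => ?_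
  rw [zsmul_eq_mul, Int.cast_mul, Int.cast_pow, Int.cast_neg, Int.cast_one, Int.cast_natCast,
    mul_assoc]
  exact (((Commute.neg_one_left _).pow_left _).mul_left (Nat.cast_commute _ _)).eq.symm

section CommRing

variable {R V W : Type*} [CommRing R] [AddCommGroup V] [Module R V] [AddCommGroup W] [Module R W]
  {F : Module.End R V} {G : Module.End R W}

lemma map_sub_one_pow_tmul (F : Module.End R V) (G : Module.End R W) (N : ℕ) (u : V) (w : W) :
    ((map F G - 1) ^ N) (u ⊗ₜ w) =
      ∑ t ∈ Finset.range (N + 1),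
        N.choose t • (((F - 1) ^ t) u ⊗ₜ (G ^ t) (((G - 1) ^ (N - t)) w)) := by
  have hsplit : map F G - 1 = map (F - 1) G + map 1 (G - 1) := by
    ext x y
    simp [sub_tmul, tmul_sub]
  have hcomm : Commute (map (F - 1) G) (map 1 (G - 1)) := by
    rw [Commute, SemiconjBy, ← TensorProduct.map_mul, ← TensorProduct.map_mul, one_mul, mul_one,
      ((Commute.refl G).sub_right (Commute.one_right G)).eq]
  rw [hsplit, hcomm.add_pow, LinearMap.sum_apply]
  refine Finset.sum_congr rfl fun t _ => ?_
  rw [Module.End.mul_apply, Module.End.mul_apply, Module.End.natCast_apply, map_nsmul, map_nsmul,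
    TensorProduct.map_pow, TensorProduct.map_pow, one_pow, map_tmul, map_tmul, Module.End.one_apply]

lemma map_sub_one_pow_tmul_eq_zero {l m N : ℕ} {u : V} {w : W} (hu : ((F - 1) ^ l) u = 0)
    (hw : ((G - 1) ^ m) w = 0) (hN : l + m ≤ N + 1) :
    ((map F G - 1) ^ N) (u ⊗ₜ w) = 0 := by
  rw [map_sub_one_pow_tmul]
  refine Finset.sum_eq_zero fun t _ => ?_
  rcases le_or_gt l t with h | h
  · rw [Module.End.pow_map_zero_of_le h hu, zero_tmul, smul_zero]
  · rw [Module.End.pow_map_zero_of_le (by omega : m ≤ N - t) hw, map_zero, tmul_zero, smul_zero]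

lemma map_sub_one_pow_tmul_of_apply_eq_smul {v : V} {β : R} (hv : F v = β • v) (n : ℕ) (w : W) :
    ((map F G - 1) ^ n) (v ⊗ₜ w) = v ⊗ₜ ((β • G - 1) ^ n) w := by
  induction n with
  | zero => simp
  | succ n ih =>
    rw [pow_succ', Module.End.mul_apply, ih, pow_succ', Module.End.mul_apply]
    simp [hv, tmul_sub, smul_tmul]

lemma map_sub_one_pow_tmul_apply_eq_zero {f : Module.End R V} (hf : Commute f F) {n : ℕ}
    {u : V} {w : W} (h : ((map F G - 1) ^ n) (u ⊗ₜ w) = 0) :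
    ((map F G - 1) ^ n) (f u ⊗ₜ w) = 0 := by
  have hcomm : Commute (map f 1) (map F G - 1) := by
    refine Commute.sub_right ?_ (Commute.one_right _)
    rw [Commute, SemiconjBy, ← TensorProduct.map_mul, ← TensorProduct.map_mul, hf.eq, one_mul,
      mul_one]
  rw [show f u ⊗ₜ w = map f 1 (u ⊗ₜ w) from rfl, ← Module.End.mul_apply,
    ← (hcomm.pow_right n).eq, Module.End.mul_apply, h, map_zero]

lemma exists_pow_apply_ne_zero_and_pow_succ_apply_eq_zero {f : Module.End R V} {x : V}
    (hx : x ≠ 0) (h : ∃ e, (f ^ e) x = 0) : ∃ l, (f ^ l) x ≠ 0 ∧ (f ^ (l + 1)) x = 0 := by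
  classical
  have hpos : Nat.find h ≠ 0 := fun h0 => hx (by simpa [h0] using Nat.find_spec h)
  refine ⟨Nat.find h - 1, Nat.find_min h (by omega), ?_⟩
  rw [Nat.sub_add_cancel (Nat.one_le_iff_ne_zero.mpr hpos)]
  exact Nat.find_spec h

lemma exists_minimal_aeval_apply_eq_zero {u : V} (h : ∃ p : R[X], p ≠ 0 ∧ aeval F p u = 0) :
    ∃ p : R[X], p ≠ 0 ∧ aeval F p u = 0 ∧
      ∀ q : R[X], q.natDegree < p.natDegree → aeval F q u = 0 → q = 0 := by
  classical
  have hd : ∃ d, ∃ p : R[X], p ≠ 0 ∧ aeval F p u = 0 ∧ p.natDegree = d :=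
    let ⟨p, hp, hpu⟩ := h; ⟨_, p, hp, hpu, rfl⟩
  obtain ⟨p, hp, hpu, hpd⟩ := Nat.find_spec hd
  exact ⟨p, hp, hpu, fun q hq hqu =>
    by_contra fun hq0 => Nat.find_min hd (hpd ▸ hq) ⟨q, hq0, hqu, rfl⟩⟩

end CommRing

section Field

variable {K V W : Type*} [Field K] [AddCommGroup V] [Module K V] [AddCommGroup W] [Module K W]
  {F : Module.End K V} {G : Module.End K W} {u : V} {w : W} {n : ℕ}

lemma eq_zero_of_tmul_eq_zero_of_ne_zero {x : W} (hu : u ≠ 0) (h : u ⊗ₜ[K] x = 0) : x = 0 := by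
  obtain ⟨φ, hφ⟩ := Module.Projective.exists_dual_eq_one K hu
  simpa [hφ] using congrArg (fun z => TensorProduct.lid K W (LinearMap.rTensor W φ z)) h

lemma map_smul_smul_inv {c : K} (hc : c ≠ 0) : map (c • F) (c⁻¹ • G) = map F G := by
  rw [map_smul_left, map_smul_right, smul_smul, mul_inv_cancel₀ hc, one_smul]

lemma smul_sub_one_pow_apply_eq_zero_iff {c : K} (hc : c ≠ 0) (m : ℕ) :
    ((c • G - 1) ^ m) w = 0 ↔ w ∈ G.genEigenspace c⁻¹ m := by
  have h : c • G - 1 = c • (G - c⁻¹ • 1) := by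
    rw [smul_sub, smul_smul, mul_inv_cancel₀ hc, one_smul]
  rw [h, smul_pow, LinearMap.smul_apply, smul_eq_zero, Module.End.mem_genEigenspace_nat,
    LinearMap.mem_ker]
  simp [hc]

lemma ne_zero_of_smul_sub_one_pow_apply_eq_zero {c : K} (hw : w ≠ 0)
    (h : ((c • G - 1) ^ n) w = 0) : c ≠ 0 := by
  rintro rfl
  rw [zero_smul, zero_sub] at h
  rcases neg_one_pow_eq_or (Module.End K W) n with h1 | h1 <;> simp [h1, hw] at h

lemma eq_of_smul_sub_one_pow_apply_eq_zero {β γ : K} (hw : w ≠ 0)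
    (hβ : ((β • G - 1) ^ n) w = 0) (hγ : ((γ • G - 1) ^ n) w = 0) : β = γ := by
  have hβ0 := ne_zero_of_smul_sub_one_pow_apply_eq_zero hw hβ
  have hγ0 := ne_zero_of_smul_sub_one_pow_apply_eq_zero hw hγ
  rw [smul_sub_one_pow_apply_eq_zero_iff hβ0] at hβ
  rw [smul_sub_one_pow_apply_eq_zero_iff hγ0] at hγ
  by_contra hne
  exact hw <| Submodule.disjoint_def.mp
    (Module.End.disjoint_genEigenspace G (inv_injective.ne hne) _ _) w hβ hγ

lemma exists_aeval_apply_eq_zero (hw : w ≠ 0) (h : ((map F G - 1) ^ n) (u ⊗ₜ w) = 0) :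
    ∃ p : K[X], p ≠ 0 ∧ aeval F p u = 0 := by
  obtain ⟨ψ, hψ⟩ := Module.Projective.exists_dual_eq_one K hw
  set c : ℕ → K := fun k => (((-1 : ℤ) ^ (n - k) * (n.choose k : ℤ) : ℤ) : K) * ψ ((G ^ k) w)
  refine ⟨∑ k ∈ Finset.range (n + 1), Polynomial.monomial k (c k), fun hp => ?_, ?_⟩
  · -- the constant coefficient is `(-1) ^ n * ψ w = (-1) ^ n`
    have h0 := congrArg (Polynomial.coeff · 0) hp
    simp [Polynomial.coeff_monomial, c, hψ] at h0
  · have hψu := congrArg (fun z => TensorProduct.rid K V (LinearMap.lTensor V ψ z)) h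
    simp only [sub_one_pow_eq_sum, LinearMap.sum_apply, LinearMap.smul_apply, map_sum, map_zsmul,
      TensorProduct.map_pow, map_tmul, LinearMap.lTensor_tmul, TensorProduct.rid_tmul,
      map_zero] at hψu
    rw [← hψu, map_sum, LinearMap.sum_apply]
    refine Finset.sum_congr rfl fun k _ => ?_
    simp [c, Polynomial.aeval_monomial, Algebra.algebraMap_eq_smul_one, mul_smul,
      ← Int.cast_smul_eq_zsmul K]

lemma smul_sub_one_pow_apply_eq_zero_of_isRoot {p : K[X]} (hp : p ≠ 0) (hpu : aeval F p u = 0)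
    (hmin : ∀ q : K[X], q.natDegree < p.natDegree → aeval F q u = 0 → q = 0) {β : K}
    (hβ : p.IsRoot β) (h : ((map F G - 1) ^ n) (u ⊗ₜ w) = 0) : ((β • G - 1) ^ n) w = 0 := by
  obtain ⟨q, rfl⟩ := Polynomial.dvd_iff_isRoot.mpr hβ
  have hq : q ≠ 0 := right_ne_zero_of_mul hp
  set v := aeval F q u
  have hv : v ≠ 0 := fun hv => hq <| hmin q (by
    rw [Polynomial.natDegree_mul (Polynomial.X_sub_C_ne_zero β) hq,
      Polynomial.natDegree_X_sub_C]; omega) hv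
  have hFv : F v = β • v := by
    rw [← sub_eq_zero]
    simpa [Algebra.algebraMap_eq_smul_one] using hpu
  have hcomm : Commute (aeval F q) F := by simpa using (Commute.all q X).map (aeval F)
  have hvw := map_sub_one_pow_tmul_apply_eq_zero hcomm h
  rw [map_sub_one_pow_tmul_of_apply_eq_smul hFv] at hvw
  exact eq_zero_of_tmul_eq_zero_of_ne_zero hv hvw

lemma eq_C_mul_X_sub_C_pow_of_forall_isRoot [IsAlgClosed K] {p : K[X]} {β : K}
    (h : ∀ γ, p.IsRoot γ → γ = β) : p = C p.leadingCoeff * (X - C β) ^ p.natDegree := by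
  have hroots : p.roots = Multiset.replicate p.natDegree β := by
    rw [← IsAlgClosed.card_roots_eq_natDegree, Multiset.eq_replicate_card]
    exact fun γ hγ => h γ (Polynomial.isRoot_of_mem_roots hγ)
  conv_lhs => rw [← Polynomial.C_leadingCoeff_mul_prod_multiset_X_sub_C (p := p)
    IsAlgClosed.card_roots_eq_natDegree, hroots]
  rw [Multiset.map_replicate, Multiset.prod_replicate]

lemma exists_smul_sub_one_pow_apply_eq_zero [IsAlgClosed K] (hu : u ≠ 0) (hw : w ≠ 0)
    (h : ((map F G - 1) ^ n) (u ⊗ₜ w) = 0) :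
    ∃ lam : K, lam ≠ 0 ∧ (∃ e : ℕ, ((lam • F - 1) ^ e) u = 0) ∧ ((lam⁻¹ • G - 1) ^ n) w = 0 := by
  obtain ⟨p, hp, hpu, hmin⟩ :=
    exists_minimal_aeval_apply_eq_zero (exists_aeval_apply_eq_zero hw h)
  have hdeg : p.degree ≠ 0 := fun hdeg => by
    rw [Polynomial.eq_C_of_degree_eq_zero hdeg] at hp hpu
    simp_all [Algebra.algebraMap_eq_smul_one]
  obtain ⟨β, hβ⟩ := IsAlgClosed.exists_root p hdeg
  have hβG := smul_sub_one_pow_apply_eq_zero_of_isRoot hp hpu hmin hβ h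
  have hβ0 := ne_zero_of_smul_sub_one_pow_apply_eq_zero hw hβG
  have hFu : ((F - β • 1) ^ p.natDegree) u = 0 := by
    rw [eq_C_mul_X_sub_C_pow_of_forall_isRoot fun γ hγ => eq_of_smul_sub_one_pow_apply_eq_zero hw
      (smul_sub_one_pow_apply_eq_zero_of_isRoot hp hpu hmin hγ h) hβG] at hpu
    simpa [Algebra.algebraMap_eq_smul_one, hp] using hpu
  refine ⟨β⁻¹, inv_ne_zero hβ0, ⟨p.natDegree, ?_⟩, by rwa [inv_inv]⟩
  rw [smul_sub_one_pow_apply_eq_zero_iff (inv_ne_zero hβ0), inv_inv,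
    Module.End.mem_genEigenspace_nat, LinearMap.mem_ker]
  exact hFu

lemma add_lt_of_map_sub_one_pow_tmul_eq_zero [CharZero K] {l m : ℕ}
    (hu : ((F - 1) ^ l) u ≠ 0) (hu' : ((F - 1) ^ (l + 1)) u = 0)
    (hw : ((G - 1) ^ m) w ≠ 0) (hw' : ((G - 1) ^ (m + 1)) w = 0)
    (h : ((map F G - 1) ^ n) (u ⊗ₜ w) = 0) : l + m < n := by
  by_contra! hn
  have hlm := Module.End.pow_map_zero_of_le hn h
  have hGw : G (((G - 1) ^ m) w) = ((G - 1) ^ m) w := by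
    rw [pow_succ', Module.End.mul_apply, LinearMap.sub_apply, sub_eq_zero] at hw'
    exact hw'
  -- at exponent `l + m` only the term `t = l` of the expansion survives
  rw [map_sub_one_pow_tmul, Finset.sum_eq_single_of_mem l (by simp) fun t _ ht => ?_,
    Nat.add_sub_cancel_left, Module.End.pow_apply G, Function.iterate_fixed hGw,
    ← Nat.cast_smul_eq_nsmul K, smul_eq_zero] at hlm
  · exact hw (eq_zero_of_tmul_eq_zero_of_ne_zero hu
      (hlm.resolve_left (Nat.cast_ne_zero.mpr (Nat.choose_pos (Nat.le_add_right l m)).ne')))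
  · rcases lt_or_gt_of_ne ht with ht | ht
    · rw [Module.End.pow_map_zero_of_le (by omega : m + 1 ≤ l + m - t) hw', map_zero, tmul_zero,
        smul_zero]
    · rw [Module.End.pow_map_zero_of_le ht hu', zero_tmul, smul_zero]

theorem map_sub_one_pow_tmul_eq_zero_iff [CharZero K] [IsAlgClosed K] (hu : u ≠ 0) (hw : w ≠ 0) :
    ((map F G - 1) ^ n) (u ⊗ₜ w) = 0 ↔
      ∃ (l m : ℕ) (lam : K), 0 < l ∧ 0 < m ∧ l + m = n + 1 ∧ lam ≠ 0 ∧
        ((lam • F - 1) ^ l) u = 0 ∧ ((lam⁻¹ • G - 1) ^ m) w = 0 := by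
  constructor
  · intro h
    obtain ⟨lam, hlam, hFu, hGw⟩ := exists_smul_sub_one_pow_apply_eq_zero hu hw h
    obtain ⟨l, hl, hl'⟩ := exists_pow_apply_ne_zero_and_pow_succ_apply_eq_zero hu hFu
    obtain ⟨m, hm, hm'⟩ := exists_pow_apply_ne_zero_and_pow_succ_apply_eq_zero hw ⟨n, hGw⟩
    rw [← map_smul_smul_inv hlam] at h
    have hlmn := add_lt_of_map_sub_one_pow_tmul_eq_zero hl hl' hm hm' h
    exact ⟨n - m, m + 1, lam, by omega, by omega, by omega, hlam,
      Module.End.pow_map_zero_of_le (by omega) hl', hm'⟩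
  · rintro ⟨l, m, lam, -, -, hlm, hlam, hFu, hGw⟩
    rw [← map_smul_smul_inv hlam]
    exact map_sub_one_pow_tmul_eq_zero hFu hGw hlm.le

end Field

section MulLeftRight

variable {R A B : Type*} [CommRing R] [Ring A] [Algebra R A] [Ring B] [Algebra R B]

lemma mulLeftRight_pow_apply_one (S T : A) (k : ℕ) :
    (LinearMap.mulLeftRight R (S, T) ^ k) 1 = S ^ k * T ^ k := by
  induction k with
  | zero => simp
  | succ k ih =>
    rw [pow_succ', Module.End.mul_apply, ih, LinearMap.mulLeftRight_apply, pow_succ' S, pow_succ T]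
    simp only [mul_assoc]

lemma beta_eq_mulLeftRight_sub_one_pow_apply_one (n : ℕ) (S T : A) :
    beta n S T = ((LinearMap.mulLeftRight R (S, T) - 1) ^ n) 1 := by
  simp only [beta, sub_one_pow_eq_sum, LinearMap.sum_apply, LinearMap.smul_apply,
    mulLeftRight_pow_apply_one]

lemma mulLeftRight_smul_right (S T : A) (c : R) :
    LinearMap.mulLeftRight R (S, c • T) = c • LinearMap.mulLeftRight R (S, T) := by
  ext a
  simp

lemma mulLeftRight_tmul (S₁ T₁ : A) (S₂ T₂ : B) :
    LinearMap.mulLeftRight R (S₁ ⊗ₜ[R] S₂, T₁ ⊗ₜ[R] T₂) =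
      map (LinearMap.mulLeftRight R (S₁, T₁)) (LinearMap.mulLeftRight R (S₂, T₂)) := by
  ext a b
  simp

end MulLeftRight

theorem beta_tensor_splitting_general
    {X Y : Type*} [NormedAddCommGroup X] [NormedSpace ℂ X] [Nontrivial X]
    [NormedAddCommGroup Y] [NormedSpace ℂ Y] [Nontrivial Y]
    (S₁ T₁ : X →L[ℂ] X) (S₂ T₂ : Y →L[ℂ] Y) (n : ℕ) :
    beta n (S₁ ⊗ₜ[ℂ] S₂) (T₁ ⊗ₜ[ℂ] T₂) = 0 ↔
      ∃ (l m : ℕ) (lam : ℂ), 0 < l ∧ 0 < m ∧ l + m = n + 1 ∧ lam ≠ 0 ∧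
        beta l S₁ (lam • T₁) = 0 ∧ beta m S₂ (lam⁻¹ • T₂) = 0 := by
  simp only [beta_eq_mulLeftRight_sub_one_pow_apply_one (R := ℂ), mulLeftRight_tmul,
    mulLeftRight_smul_right, Algebra.TensorProduct.one_def]
  exact map_sub_one_pow_tmul_eq_zero_iff one_ne_zero one_ne_zero

/-- Theorem 1 (tensor splitting of `n`-inverse pairs): for nonzero complex Banach
spaces `X`, `Y`, `S₁⊗S₂` is a left `n`-inverse of `T₁⊗T₂` iff there are `l,m ≥ 1` with
`l+m = n+1` and `λ ≠ 0` with `S₁` a left `l`-inverse of `λT₁` and `S₂` a left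
`m`-inverse of `(1/λ)T₂`. -/
theorem beta_tensor_splitting
    {X Y : Type*} [NormedAddCommGroup X] [NormedSpace ℂ X] [CompleteSpace X] [Nontrivial X]
    [NormedAddCommGroup Y] [NormedSpace ℂ Y] [CompleteSpace Y] [Nontrivial Y]
    (S₁ T₁ : X →L[ℂ] X) (S₂ T₂ : Y →L[ℂ] Y) (n : ℕ) (hn : 1 ≤ n) :
    beta n (S₁ ⊗ₜ[ℂ] S₂) (T₁ ⊗ₜ[ℂ] T₂) = 0 ↔
      ∃ (l m : ℕ) (lam : ℂ), 0 < l ∧ 0 < m ∧ l + m = n + 1 ∧ lam ≠ 0 ∧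
        beta l S₁ (lam • T₁) = 0 ∧ beta m S₂ (lam⁻¹ • T₂) = 0 :=
  beta_tensor_splitting_general S₁ T₁ S₂ T₂ n
end

section
/- Let Φ : ℂ[x,y] → ℂ⟨X,Y⟩ be the ℂ-linear map determined on the monomial basis by Φ(x^i y^j) = X^i Y^j. Then for every two-sided ideal 𝓘 of ℂ⟨X,Y⟩, the preimage Φ⁻¹(𝓘) is an ideal of ℂ[x,y]. -/
/-- The ℂ-linear map `Φ : ℂ[x,y] → ℂ⟨X,Y⟩` determined on the monomial basis by
`Φ(x^i y^j) = X^i Y^j`. -/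
noncomputable def Phi : MvPolynomial (Fin 2) ℂ →ₗ[ℂ] FreeAlgebra ℂ (Fin 2) :=
  (MvPolynomial.basisMonomials (Fin 2) ℂ).constr ℂ
    fun m => FreeAlgebra.ι ℂ 0 ^ m 0 * FreeAlgebra.ι ℂ 1 ^ m 1

/-! Since `Φ` puts every `X` before every `Y`, multiplying by `x^i y^j` on the commutative side
is multiplying by `X^i` on the left and by `Y^j` on the right on the free side, so `Φ⁻¹(𝓘)`
inherits closure under multiplication from `𝓘` being two-sided. -/

open MvPolynomial

lemma Phi_monomial (m : Fin 2 →₀ ℕ) (c : ℂ) :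
    Phi (monomial m c) = c • (FreeAlgebra.ι ℂ 0 ^ m 0 * FreeAlgebra.ι ℂ 1 ^ m 1) := by
  have h : monomial m c = c • basisMonomials (Fin 2) ℂ m := by
    rw [coe_basisMonomials, smul_monomial, smul_eq_mul, mul_one]
  rw [h, map_smul, Phi, Module.Basis.constr_basis]

lemma Phi_monomial_mul (m : Fin 2 →₀ ℕ) (c : ℂ) (p : MvPolynomial (Fin 2) ℂ) :
    Phi (monomial m c * p) =
      c • (FreeAlgebra.ι ℂ 0 ^ m 0 * Phi p * FreeAlgebra.ι ℂ 1 ^ m 1) := by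
  induction p using MvPolynomial.induction_on' with
  | monomial n d =>
    rw [monomial_mul, Phi_monomial, Phi_monomial, mul_smul, mul_smul_comm, smul_mul_assoc]
    simp only [Finsupp.add_apply, pow_add, mul_assoc, ← pow_add _ (n 1), add_comm (n 1)]
  | add p q hp hq => rw [mul_add, map_add, map_add, hp, hq, mul_add, add_mul, smul_add]

lemma Phi_mul_mem_of_mem (I : TwoSidedIdeal (FreeAlgebra ℂ (Fin 2)))
    (q : MvPolynomial (Fin 2) ℂ) {p : MvPolynomial (Fin 2) ℂ} (hp : Phi p ∈ I) :
    Phi (q * p) ∈ I := by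
  induction q using MvPolynomial.induction_on' with
  | monomial m c =>
    rw [Phi_monomial_mul, Algebra.smul_def]
    exact I.mul_mem_left _ _ (I.mul_mem_right _ _ (I.mul_mem_left _ _ hp))
  | add q r hq hr => simpa only [add_mul, map_add] using I.add_mem hq hr

/-- Proposition 2.1: the preimage under `Φ` of any two-sided ideal of `ℂ⟨X,Y⟩` is an
ideal of `ℂ[x,y]`. -/
theorem phi_preimage_twoSidedIdeal (I : TwoSidedIdeal (FreeAlgebra ℂ (Fin 2))) :
    ∃ K : Ideal (MvPolynomial (Fin 2) ℂ),
      (K : Set (MvPolynomial (Fin 2) ℂ)) = Phi ⁻¹' (I : Set (FreeAlgebra ℂ (Fin 2))) :=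
  ⟨{ carrier := Phi ⁻¹' I
     add_mem' := fun ha hb => by
       simpa only [Set.mem_preimage, SetLike.mem_coe, map_add] using I.add_mem ha hb
     zero_mem' := by simpa only [Set.mem_preimage, SetLike.mem_coe, map_zero] using I.zero_mem
     smul_mem' := fun q _ hp => Phi_mul_mem_of_mem I q hp }, rfl⟩
end

section
/- Let R = ℂ[x,y], F = ℂ⟨X,Y⟩, let A₁, A₂ be unital ℂ-algebras, κ₁ : F → A₁ and κ₂ : F → A₂ ℂ-algebra homomorphisms, and δ : R → R ⊗ R an injective ℂ-algebra homomorphism. Let p, q₁, q₂ ∈ R and suppose δ(p) lies in the ideal of R ⊗ R generated by q₁⊗1 and 1⊗q₂. If Φ(q₁^l) ∈ ker κ₁ and Φ(q₂^m) ∈ ker κ₂ for some l, m ≥ 1, then with n = l + m − 1 the ℂ-linear map (κ₁∘Φ) ⊗ (κ₂∘Φ) : R ⊗ R → A₁ ⊗ A₂ sends δ(p^n) to 0. -/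
open scoped TensorProduct

theorem Ideal.pow_add_sub_one_mem_span_pow_pair {α : Type*} [CommSemiring α] {u v z : α}
    (hz : z ∈ span {u, v}) (l m : ℕ) : z ^ (l + m - 1) ∈ span {u ^ l, v ^ m} := by
  obtain ⟨a, b, rfl⟩ := mem_span_pair.mp hz
  apply add_pow_add_pred_mem_of_pow_mem <;> rw [mul_pow] <;>
    exact mul_mem_left _ _ (subset_span (by simp))

namespace TensorProduct

variable {R S T M N : Type*} [CommSemiring R] [CommSemiring S] [Algebra R S]
  [CommSemiring T] [Algebra R T] [AddCommMonoid M] [Module R M] [AddCommMonoid N] [Module R N]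
  (f : S →ₗ[R] M) (g : T →ₗ[R] N)

theorem map_mul_tmul_eq_zero_of_left {x : S} (hx : ∀ a, f (a * x) = 0) (y : T)
    (c : S ⊗[R] T) : map f g (c * x ⊗ₜ y) = 0 := by
  induction c using TensorProduct.induction_on with
  | zero => rw [zero_mul, map_zero]
  | tmul a b => rw [Algebra.TensorProduct.tmul_mul_tmul, map_tmul, hx, zero_tmul]
  | add c d hc hd => rw [add_mul, map_add, hc, hd, add_zero]

theorem map_mul_tmul_eq_zero_of_right (x : S) {y : T} (hy : ∀ b, g (b * y) = 0)
    (c : S ⊗[R] T) : map f g (c * x ⊗ₜ y) = 0 := by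
  induction c using TensorProduct.induction_on with
  | zero => rw [zero_mul, map_zero]
  | tmul a b => rw [Algebra.TensorProduct.tmul_mul_tmul, map_tmul, hy, tmul_zero]
  | add c d hc hd => rw [add_mul, map_add, hc, hd, add_zero]

theorem map_eq_zero_of_mem_span_pair {x : S} {y : T} (hx : ∀ a, f (a * x) = 0)
    (hy : ∀ b, g (b * y) = 0) {z : S ⊗[R] T}
    (hz : z ∈ Ideal.span {x ⊗ₜ[R] (1 : T), (1 : S) ⊗ₜ[R] y}) : map f g z = 0 := by
  obtain ⟨a, b, rfl⟩ := Ideal.mem_span_pair.mp hz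
  rw [map_add, map_mul_tmul_eq_zero_of_left f g hx, map_mul_tmul_eq_zero_of_right f g _ hy,
    add_zero]

end TensorProduct

theorem MvPolynomial.smul_monomial_one {R σ : Type*} [CommSemiring R] (s : σ →₀ ℕ) (c : R) :
    c • monomial s (1 : R) = monomial s c := by
  rw [smul_monomial, smul_eq_mul, mul_one]

theorem Phi_monomial_one (s : Fin 2 →₀ ℕ) :
    Phi (MvPolynomial.monomial s 1) = FreeAlgebra.ι ℂ 0 ^ s 0 * FreeAlgebra.ι ℂ 1 ^ s 1 := by
  simpa [Phi, MvPolynomial.coe_basisMonomials] using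
    (MvPolynomial.basisMonomials (Fin 2) ℂ).constr_basis ℂ
      (fun m => FreeAlgebra.ι ℂ (0 : Fin 2) ^ m 0 * FreeAlgebra.ι ℂ (1 : Fin 2) ^ m 1) s

theorem Phi_monomial_one_mul (s : Fin 2 →₀ ℕ) (f : MvPolynomial (Fin 2) ℂ) :
    Phi (MvPolynomial.monomial s 1 * f) =
      FreeAlgebra.ι ℂ 0 ^ s 0 * Phi f * FreeAlgebra.ι ℂ 1 ^ s 1 := by
  induction f using MvPolynomial.induction_on' with
  | monomial t c =>
      rw [← MvPolynomial.smul_monomial_one t c, mul_smul_comm, map_smul,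
        map_smul, MvPolynomial.monomial_mul, one_mul, Phi_monomial_one, Phi_monomial_one]
      simp only [Finsupp.add_apply, pow_add, mul_smul_comm, smul_mul_assoc, mul_assoc]
      rw [(Commute.pow_pow_self (FreeAlgebra.ι ℂ (1 : Fin 2)) (s 1) (t 1)).eq]
  | add f g hf hg => rw [mul_add, map_add, map_add, hf, hg, mul_add, add_mul]

theorem map_Phi_mul_eq_zero {A : Type*} [Ring A] [Algebra ℂ A]
    (κ : FreeAlgebra ℂ (Fin 2) →ₐ[ℂ] A) {q : MvPolynomial (Fin 2) ℂ} (hq : κ (Phi q) = 0)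
    (f : MvPolynomial (Fin 2) ℂ) : κ (Phi (f * q)) = 0 := by
  induction f using MvPolynomial.induction_on' with
  | monomial s c =>
      rw [← MvPolynomial.smul_monomial_one s c, smul_mul_assoc, map_smul,
        map_smul, Phi_monomial_one_mul, map_mul, map_mul, hq, mul_zero, zero_mul, smul_zero]
  | add f g hf hg => rw [add_mul, map_add, map_add, hf, hg, add_zero]

theorem weak_tensor_product_lemma_general
    {A₁ A₂ : Type*} [Ring A₁] [Algebra ℂ A₁] [Ring A₂] [Algebra ℂ A₂]
    (κ₁ : FreeAlgebra ℂ (Fin 2) →ₐ[ℂ] A₁) (κ₂ : FreeAlgebra ℂ (Fin 2) →ₐ[ℂ] A₂)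
    (δ : MvPolynomial (Fin 2) ℂ →ₐ[ℂ] (MvPolynomial (Fin 2) ℂ ⊗[ℂ] MvPolynomial (Fin 2) ℂ))
    (p q₁ q₂ : MvPolynomial (Fin 2) ℂ)
    (hp : δ p ∈ Ideal.span {q₁ ⊗ₜ[ℂ] (1 : MvPolynomial (Fin 2) ℂ),
            (1 : MvPolynomial (Fin 2) ℂ) ⊗ₜ[ℂ] q₂})
    (l m : ℕ)
    (h₁ : κ₁ (Phi (q₁ ^ l)) = 0) (h₂ : κ₂ (Phi (q₂ ^ m)) = 0) :
    TensorProduct.map (κ₁.toLinearMap ∘ₗ Phi) (κ₂.toLinearMap ∘ₗ Phi)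
      (δ (p ^ (l + m - 1))) = 0 := by
  have hpow := Ideal.pow_add_sub_one_mem_span_pow_pair hp l m
  rw [← map_pow, Algebra.TensorProduct.tmul_pow, Algebra.TensorProduct.tmul_pow, one_pow,
    one_pow] at hpow
  exact TensorProduct.map_eq_zero_of_mem_span_pair _ _ (map_Phi_mul_eq_zero κ₁ h₁)
    (map_Phi_mul_eq_zero κ₂ h₂) hpow

/-- Lemma 3.4: if `δ(p)` lies in the ideal of `R⊗R` generated by `q₁⊗1` and `1⊗q₂`,
`Φ(q₁^l) ∈ ker κ₁`, and `Φ(q₂^m) ∈ ker κ₂`, then `(κ₁∘Φ)⊗(κ₂∘Φ)` kills `δ(p^n)` where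
`n = l + m − 1`. -/
theorem weak_tensor_product_lemma
    {A₁ A₂ : Type*} [Ring A₁] [Algebra ℂ A₁] [Ring A₂] [Algebra ℂ A₂]
    (κ₁ : FreeAlgebra ℂ (Fin 2) →ₐ[ℂ] A₁) (κ₂ : FreeAlgebra ℂ (Fin 2) →ₐ[ℂ] A₂)
    (δ : MvPolynomial (Fin 2) ℂ →ₐ[ℂ] (MvPolynomial (Fin 2) ℂ ⊗[ℂ] MvPolynomial (Fin 2) ℂ))
    (hδ : Function.Injective δ) (p q₁ q₂ : MvPolynomial (Fin 2) ℂ)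
    (hp : δ p ∈ Ideal.span {q₁ ⊗ₜ[ℂ] (1 : MvPolynomial (Fin 2) ℂ),
            (1 : MvPolynomial (Fin 2) ℂ) ⊗ₜ[ℂ] q₂})
    (l m : ℕ) (hl : 1 ≤ l) (hm : 1 ≤ m)
    (h₁ : κ₁ (Phi (q₁ ^ l)) = 0) (h₂ : κ₂ (Phi (q₂ ^ m)) = 0) :
    TensorProduct.map (κ₁.toLinearMap ∘ₗ Phi) (κ₂.toLinearMap ∘ₗ Phi)
      (δ (p ^ (l + m - 1))) = 0 :=
  weak_tensor_product_lemma_general κ₁ κ₂ δ p q₁ q₂ hp l m h₁ h₂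
end

section
/- Let R = ℂ[x,y] and S = ℂ[x₁,y₁,x₂,y₂], let I, J be ideals of R, and let P ∈ S satisfy P ∈ √(I′ + J″). Then for every (a,b) ∈ V(I), the polynomial in ℂ[x,y] obtained from P by substituting x₁ = a, y₁ = b, x₂ = x, y₂ = y lies in √J; and for every (c,d) ∈ V(J), the polynomial obtained by substituting x₂ = c, y₂ = d, x₁ = x, y₁ = y lies in √I. -/
open MvPolynomial

lemma aux_map_radical {R S : Type*} [CommRing R] [CommRing S]
    (A B : Ideal R) (K : Ideal S) (φ : R →+* S)
    (hA : Ideal.map φ A ≤ K) (hB : Ideal.map φ B ≤ K)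
    (P : R) (hP : P ∈ (A ⊔ B).radical) : φ P ∈ K.radical := by
  obtain ⟨n, hn⟩ := hP
  refine ⟨n, ?_⟩
  rw [← map_pow]
  have := Ideal.mem_map_of_mem φ hn
  rw [Ideal.map_sup] at this
  exact sup_le hA hB this

lemma aux_aeval_C {σ : Type*} (g : σ → ℂ) (q : MvPolynomial σ ℂ) :
    aeval (fun i => (C (g i) : MvPolynomial σ ℂ)) q = C (eval g q) := by
  rw [aeval_def, algebraMap_eq]
  rw [show eval g q = eval₂ (RingHom.id ℂ) g q from rfl]
  rw [eval₂_comp_left C (RingHom.id ℂ) g q]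
  rfl

/-- Lemma 3.9 (via the Nullstellensatz): if `P ∈ √(I′ + J″)` in
`S = ℂ[x₁,y₁,x₂,y₂]` (variables indexed `x₁ = 0, y₁ = 1, x₂ = 2, y₂ = 3`), then
substituting any point of `V(I)` into the first pair of variables lands the result in
`√J`, and substituting any point of `V(J)` into the second pair lands it in `√I`. -/
theorem nullstellensatz_substitution
    (I J : Ideal (MvPolynomial (Fin 2) ℂ)) (P : MvPolynomial (Fin 4) ℂ)
    (hP : P ∈ (Ideal.map (rename (![0, 1] : Fin 2 → Fin 4)) I ⊔
               Ideal.map (rename (![2, 3] : Fin 2 → Fin 4)) J).radical) :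
    (∀ a b : ℂ, (∀ q ∈ I, eval (![a, b] : Fin 2 → ℂ) q = 0) →
      aeval (![C a, C b, X 0, X 1] : Fin 4 → MvPolynomial (Fin 2) ℂ) P ∈ J.radical) ∧
    (∀ c d : ℂ, (∀ q ∈ J, eval (![c, d] : Fin 2 → ℂ) q = 0) →
      aeval (![X 0, X 1, C c, C d] : Fin 4 → MvPolynomial (Fin 2) ℂ) P ∈ I.radical) := by
  constructor
  · intro a b hab
    set v : Fin 4 → MvPolynomial (Fin 2) ℂ := ![C a, C b, X 0, X 1] with hv
    refine aux_map_radical _ _ J ((aeval v).toRingHom) ?_ ?_ P hP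
    · rw [Ideal.map_le_iff_le_comap, Ideal.map_le_iff_le_comap]
      intro q hq
      simp only [Ideal.mem_comap, AlgHom.toRingHom_eq_coe, RingHom.coe_coe, AlgHom.coe_coe]
      have h1 : (aeval v) (rename (![0,1] : Fin 2 → Fin 4) q)
          = aeval (v ∘ (![0,1] : Fin 2 → Fin 4)) q := by
        rw [aeval_rename]
      have h2 : v ∘ (![0,1] : Fin 2 → Fin 4)
          = fun i => (C ((![a,b] : Fin 2 → ℂ) i) : MvPolynomial (Fin 2) ℂ) := by
        funext i; fin_cases i <;> simp [hv]
      rw [h1, h2, aux_aeval_C, hab q hq]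
      simp
    · rw [Ideal.map_le_iff_le_comap, Ideal.map_le_iff_le_comap]
      intro q hq
      simp only [Ideal.mem_comap, AlgHom.toRingHom_eq_coe, RingHom.coe_coe, AlgHom.coe_coe]
      have h1 : (aeval v) (rename (![2,3] : Fin 2 → Fin 4) q)
          = aeval (v ∘ (![2,3] : Fin 2 → Fin 4)) q := by
        rw [aeval_rename]
      have h2 : v ∘ (![2,3] : Fin 2 → Fin 4) = X := by
        funext i; fin_cases i <;> simp [hv]
      rw [h1, h2, aeval_X_left_apply]
      exact hq
  · intro c d hcd
    set v : Fin 4 → MvPolynomial (Fin 2) ℂ := ![X 0, X 1, C c, C d] with hv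
    refine aux_map_radical _ _ I ((aeval v).toRingHom) ?_ ?_ P hP
    · rw [Ideal.map_le_iff_le_comap, Ideal.map_le_iff_le_comap]
      intro q hq
      simp only [Ideal.mem_comap, AlgHom.toRingHom_eq_coe, RingHom.coe_coe, AlgHom.coe_coe]
      have h1 : (aeval v) (rename (![0,1] : Fin 2 → Fin 4) q)
          = aeval (v ∘ (![0,1] : Fin 2 → Fin 4)) q := by
        rw [aeval_rename]
      have h2 : v ∘ (![0,1] : Fin 2 → Fin 4) = X := by
        funext i; fin_cases i <;> simp [hv]
      rw [h1, h2, aeval_X_left_apply]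
      exact hq
    · rw [Ideal.map_le_iff_le_comap, Ideal.map_le_iff_le_comap]
      intro q hq
      simp only [Ideal.mem_comap, AlgHom.toRingHom_eq_coe, RingHom.coe_coe, AlgHom.coe_coe]
      have h1 : (aeval v) (rename (![2,3] : Fin 2 → Fin 4) q)
          = aeval (v ∘ (![2,3] : Fin 2 → Fin 4)) q := by
        rw [aeval_rename]
      have h2 : v ∘ (![2,3] : Fin 2 → Fin 4)
          = fun i => (C ((![c,d] : Fin 2 → ℂ) i) : MvPolynomial (Fin 2) ℂ) := by
        funext i; fin_cases i <;> simp [hv]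
      rw [h1, h2, aux_aeval_C, hcd q hq]
      simp
end

section
/- Let A₁, A₂ be unital ℂ-algebras and let S₁, T₁ ∈ A₁ and S₂, T₂ ∈ A₂ all be nonzero, and let n ≥ 1. Then γ_n(S₁⊗1 + 1⊗S₂, T₁⊗1 + 1⊗T₂) = 0 in the algebraic tensor product A₁ ⊗ A₂ if and only if there exist positive integers l, m with l + m = n + 1 and λ ∈ ℂ such that γ_l(S₁ + λ·1, T₁) = 0 in A₁ and γ_m(S₂ − λ·1, T₂) = 0 in A₂. -/
open scoped TensorProduct

/-- `γ_n(S,T) = Σ_{k=0}^n (−1)^{n−k} C(n,k) S^k T^{n−k}`. -/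
noncomputable def gamma {A : Type*} [Ring A] (n : ℕ) (S T : A) : A :=
  ∑ k ∈ Finset.range (n + 1), ((-1 : ℤ) ^ (n - k) * (n.choose k : ℤ)) • (S ^ k * T ^ (n - k))

/-!
Write `δ = L_S − R_T` for the generalized derivation, so that `γ_n(S,T) = δⁿ(1)`. For the tensor
sums, `δ = δ₁ ⊗ 1 + 1 ⊗ δ₂` with commuting summands, hence
`γ_n = Σ C(n,k) γ_k(S₁,T₁) ⊗ γ_{n−k}(S₂,T₂)`; replacing `(S₁, S₂)` by `(S₁ + λ, S₂ − λ)` does not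
change the tensor sums. This gives the easy direction.

Conversely, let `I ⊆ ℂ[X]` be the ideal of `p` with `p(δ₁)(1) = 0`. If `(X + λ)^r` divides every
element of `I`, then for `k < r` the vector `(δ₁ + λ)^k(1)` lies outside the span of the higher
powers, and applying a separating functional to the expansion shows inductively that
`(δ₂ − λ)^{n−k}(1) = 0`. With `r = n + 1` this would give `1 = 0`, and two distinct roots of a
generator of `I` would give coprime polynomials annihilating `1` under `δ₂`. So
`I = ((X − ρ)^l)` with `1 ≤ l ≤ n`, and `r = l` yields `γ_{n+1−l}(S₂ + ρ, T₂) = 0`.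
-/

open Polynomial TensorProduct LinearMap

section CommRing

variable {R A : Type*} [CommRing R] [Ring A] [Algebra R A]

variable (R) in
noncomputable def genDeriv (S T : A) : Module.End R A :=
  mulLeft R S - mulRight R T

theorem gamma_eq_genDeriv_pow (n : ℕ) (S T : A) : gamma n S T = (genDeriv R S T ^ n) 1 := by
  have hneg : -mulRight R T = mulRight R (-T) := by ext; simp
  rw [genDeriv, sub_eq_add_neg, hneg, (commute_mulLeft_right S (-T)).add_pow,
    LinearMap.sum_apply, gamma]
  refine Finset.sum_congr rfl fun k _ => ?_
  simp only [Module.End.mul_apply, pow_mulLeft, pow_mulRight, Module.End.natCast_apply,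
    mulLeft_apply, mulRight_apply, neg_pow T, zsmul_eq_mul, Int.cast_mul, Int.cast_pow,
    Int.cast_neg, Int.cast_one, Int.cast_natCast, nsmul_eq_mul, mul_one]
  have hu : Commute ((-1) ^ (n - k) * (n.choose k : A)) (S ^ k) :=
    ((Commute.neg_one_left _).pow_left _).mul_left (Nat.cast_commute _ _)
  rw [← mul_assoc, hu.eq, mul_assoc, ((Commute.neg_one_left _).pow_left _).eq, mul_assoc]

theorem genDeriv_add_smul_one (S T : A) (c : R) :
    genDeriv R (S + c • 1) T = genDeriv R S T + algebraMap R _ c := by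
  ext x
  simp [genDeriv, add_mul]
  abel

theorem gamma_add_smul_one (n : ℕ) (S T : A) (c : R) :
    gamma n (S + c • 1) T = aeval (genDeriv R S T) ((X + C c) ^ n) 1 := by
  rw [gamma_eq_genDeriv_pow (R := R), genDeriv_add_smul_one]
  simp

theorem gamma_sub_smul_one (n : ℕ) (S T : A) (c : R) :
    gamma n (S - c • 1) T = aeval (genDeriv R S T) ((X - C c) ^ n) 1 := by
  rw [sub_eq_add_neg, ← neg_smul, gamma_add_smul_one (R := R), map_neg, ← sub_eq_add_neg]

theorem gamma_eq_zero_of_le {S T : A} {l k : ℕ} (hlk : l ≤ k) (h : gamma l S T = 0) :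
    gamma k S T = 0 := by
  rw [gamma_eq_genDeriv_pow (R := ℤ)] at h ⊢
  rw [← Nat.sub_add_cancel hlk, pow_add, Module.End.mul_apply, h, map_zero]

end CommRing

section TensorProduct

variable {R A₁ A₂ : Type*} [CommRing R] [Ring A₁] [Algebra R A₁] [Ring A₂] [Algebra R A₂]

theorem genDeriv_tmul_one_add_one_tmul (S₁ T₁ : A₁) (S₂ T₂ : A₂) :
    genDeriv R (S₁ ⊗ₜ[R] (1 : A₂) + (1 : A₁) ⊗ₜ[R] S₂) (T₁ ⊗ₜ[R] (1 : A₂) + (1 : A₁) ⊗ₜ[R] T₂) =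
      rTensor A₂ (genDeriv R S₁ T₁) + lTensor A₁ (genDeriv R S₂ T₂) := by
  ext a b
  simp [genDeriv, add_mul, mul_add]
  abel

theorem gamma_tmul_one_add_one_tmul (n : ℕ) (S₁ T₁ : A₁) (S₂ T₂ : A₂) :
    gamma n (S₁ ⊗ₜ[R] (1 : A₂) + (1 : A₁) ⊗ₜ[R] S₂) (T₁ ⊗ₜ[R] (1 : A₂) + (1 : A₁) ⊗ₜ[R] T₂) =
      ∑ k ∈ Finset.range (n + 1), n.choose k • (gamma k S₁ T₁ ⊗ₜ[R] gamma (n - k) S₂ T₂) := by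
  have hc : Commute (rTensor A₂ (genDeriv R S₁ T₁)) (lTensor A₁ (genDeriv R S₂ T₂)) := by
    change _ ∘ₗ _ = _ ∘ₗ _
    rw [rTensor_comp_lTensor, lTensor_comp_rTensor]
  rw [gamma_eq_genDeriv_pow (R := R), genDeriv_tmul_one_add_one_tmul, hc.add_pow,
    LinearMap.sum_apply]
  refine Finset.sum_congr rfl fun k _ => ?_
  rw [gamma_eq_genDeriv_pow (R := R), gamma_eq_genDeriv_pow (R := R),
    Algebra.TensorProduct.one_def]
  simp only [Module.End.mul_apply, Module.End.natCast_apply, rTensor_pow, lTensor_pow, map_nsmul,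
    lTensor_tmul, rTensor_tmul]

theorem tmul_one_add_one_tmul_shift (S₁ : A₁) (S₂ : A₂) (c : R) :
    (S₁ + c • 1) ⊗ₜ[R] (1 : A₂) + (1 : A₁) ⊗ₜ[R] (S₂ - c • 1) =
      S₁ ⊗ₜ[R] (1 : A₂) + (1 : A₁) ⊗ₜ[R] S₂ := by
  rw [add_tmul, tmul_sub, smul_tmul]
  abel

theorem gamma_tmul_one_add_one_tmul_eq_zero {S₁ T₁ : A₁} {S₂ T₂ : A₂} {l m n : ℕ}
    (hlmn : l + m ≤ n + 1) (h₁ : gamma l S₁ T₁ = 0) (h₂ : gamma m S₂ T₂ = 0) :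
    gamma n (S₁ ⊗ₜ[R] (1 : A₂) + (1 : A₁) ⊗ₜ[R] S₂)
      (T₁ ⊗ₜ[R] (1 : A₂) + (1 : A₁) ⊗ₜ[R] T₂) = 0 := by
  rw [gamma_tmul_one_add_one_tmul]
  refine Finset.sum_eq_zero fun k hk => ?_
  rcases le_or_gt l k with hlk | hkl
  · rw [gamma_eq_zero_of_le hlk h₁, zero_tmul, smul_zero]
  · have hmk : m ≤ n - k := by grind
    rw [gamma_eq_zero_of_le hmk h₂, tmul_zero, smul_zero]

end TensorProduct

section Field

variable {K V W : Type*} [Field K] [AddCommGroup V] [Module K V] [AddCommGroup W] [Module K W]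

theorem TensorProduct.eq_zero_of_sum_tmul_eq_zero {ι : Type*} {s : Finset ι} {v : ι → V}
    {w : ι → W} (h : ∑ i ∈ s, v i ⊗ₜ[K] w i = 0) {P : Submodule K V} {j : ι} (hj : j ∈ s)
    (hvj : v j ∉ P) (hP : ∀ i ∈ s, i ≠ j → v i ∈ P ∨ w i = 0) : w j = 0 := by
  obtain ⟨φ, hφj, hφP⟩ := P.exists_dual_map_eq_bot_of_notMem hvj inferInstance
  have hφ : ∑ i ∈ s, φ (v i) • w i = 0 := by
    simpa using congrArg (TensorProduct.lid K W ∘ rTensor W φ) h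
  rw [Finset.sum_eq_single_of_mem j hj] at hφ
  · exact (smul_eq_zero.mp hφ).resolve_left hφj
  · intro i hi hij
    rcases hP i hi hij with hvi | hwi
    · rw [(Submodule.eq_bot_iff _).mp hφP _ (Submodule.mem_map_of_mem hvi), zero_smul]
    · rw [hwi, smul_zero]

theorem TensorProduct.eq_zero_of_sum_range_tmul_eq_zero {v : ℕ → V} {w : ℕ → W} {n r : ℕ}
    (h : ∑ k ∈ Finset.range (n + 1), v k ⊗ₜ[K] w k = 0) (hr : r ≤ n + 1)
    (hv : ∀ k < r, v k ∉ Submodule.span K (v '' Set.Ioi k)) : ∀ k < r, w k = 0 := by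
  intro k hk
  induction k using Nat.strong_induction_on with
  | _ k ih =>
    refine eq_zero_of_sum_tmul_eq_zero h (Finset.mem_range.mpr (by omega)) (hv k hk) ?_
    intro i _ hik
    rcases hik.lt_or_gt with hlt | hgt
    · exact .inr (ih i hlt (hlt.trans hk))
    · exact .inl (Submodule.subset_span ⟨i, hgt, rfl⟩)

end Field

section Annihilator

variable {K M : Type*} [CommRing K] [AddCommGroup M] [Module K M]

noncomputable def orderIdeal (D : Module.End K M) (v : M) : Ideal K[X] :=
  Ideal.torsionOf K[X] (Module.AEval' D) (Module.AEval'.of D v)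

variable {D : Module.End K M} {v : M}

theorem mem_orderIdeal {p : K[X]} : p ∈ orderIdeal D v ↔ aeval D p v = 0 := by
  rw [orderIdeal, Ideal.mem_torsionOf_iff, ← Module.AEval.of_aeval_smul,
    LinearEquiv.map_eq_zero_iff]
  rfl

theorem orderIdeal_ne_top (hv : v ≠ 0) : orderIdeal D v ≠ ⊤ := by
  rwa [Ne, Ideal.eq_top_iff_one, mem_orderIdeal, map_one, Module.End.one_apply]

theorem aeval_pow_apply_notMem_span [IsDomain K] {P : K[X]} (hP₀ : P ≠ 0) (hP : ¬IsUnit P)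
    {k : ℕ} (hk : orderIdeal D v ≤ Ideal.span {P ^ (k + 1)}) :
    aeval D (P ^ k) v ∉ Submodule.span K ((fun j => aeval D (P ^ j) v) '' Set.Ioi k) := by
  let ev : K[X] →ₗ[K] M := LinearMap.applyₗ v ∘ₗ (aeval D).toLinearMap
  have hev : (fun j => aeval D (P ^ j) v) '' Set.Ioi k = ev '' ((P ^ ·) '' Set.Ioi k) := by
    rw [Set.image_image]; rfl
  rw [hev, Submodule.span_image, Submodule.mem_map]
  rintro ⟨q, hq, hqk⟩
  have hspan : Submodule.span K ((P ^ ·) '' Set.Ioi k) ≤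
      (Ideal.span {P ^ (k + 1)}).restrictScalars K := by
    rw [Submodule.span_le]
    rintro _ ⟨j, hj, rfl⟩
    exact Ideal.mem_span_singleton.mpr (pow_dvd_pow P hj)
  have hdiff : P ^ k - q ∈ orderIdeal D v := by
    rw [mem_orderIdeal, map_sub, LinearMap.sub_apply, sub_eq_zero]
    exact hqk.symm
  have hdvd : P ^ (k + 1) ∣ P ^ k := by
    simpa using dvd_add (Ideal.mem_span_singleton.mp (hk hdiff))
      (Ideal.mem_span_singleton.mp (hspan hq))
  exact absurd ((pow_dvd_pow_iff hP₀ hP).mp hdvd) (by omega)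

end Annihilator

theorem Polynomial.exists_eq_span_X_sub_C_pow {K : Type*} [Field K] [IsAlgClosed K]
    {I : Ideal K[X]} (hbot : I ≠ ⊥) (htop : I ≠ ⊤)
    (huniq : ∀ μ ν, I ≤ Ideal.span {X - C μ} → I ≤ Ideal.span {X - C ν} → μ = ν) :
    ∃ ρ l, 0 < l ∧ I = Ideal.span {(X - C ρ) ^ l} := by
  set f := Submodule.IsPrincipal.generator I
  have hI : I = Ideal.span {f} := (Ideal.span_singleton_generator I).symm
  have hf₀ : f ≠ 0 := by rwa [Ne, ← Submodule.IsPrincipal.eq_bot_iff_generator_eq_zero]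
  have hfu : ¬IsUnit f := by rwa [hI, Ne, Ideal.span_singleton_eq_top] at htop
  have hdeg := degree_pos_of_ne_zero_of_nonunit hf₀ hfu
  obtain ⟨ρ, hρ⟩ := IsAlgClosed.exists_root f hdeg.ne'
  have hle : ∀ μ, f.IsRoot μ → I ≤ Ideal.span {X - C μ} := fun μ hμ => by
    rw [hI, Ideal.span_singleton_le_span_singleton]
    exact dvd_iff_isRoot.mpr hμ
  have hroots : f.roots = Multiset.replicate f.natDegree ρ := by
    rw [Multiset.eq_replicate, IsAlgClosed.card_roots_eq_natDegree]
    exact ⟨rfl, fun μ hμ => huniq _ _ (hle μ (isRoot_of_mem_roots hμ)) (hle ρ hρ)⟩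
  have hf := C_leadingCoeff_mul_prod_multiset_X_sub_C
    (IsAlgClosed.card_roots_eq_natDegree (p := f))
  rw [hroots, Multiset.map_replicate, Multiset.prod_replicate] at hf
  refine ⟨ρ, f.natDegree, natDegree_pos_iff_degree_pos.mpr hdeg, ?_⟩
  conv_lhs => rw [hI, ← hf]
  exact Ideal.span_singleton_mul_left_unit
    (isUnit_C.mpr (leadingCoeff_ne_zero.mpr hf₀).isUnit) _

theorem Polynomial.eq_of_X_sub_C_pow_mem {K : Type*} [Field K] {J : Ideal K[X]} (hJ : J ≠ ⊤)
    {a b : K} {m n : ℕ} (ha : (X - C a) ^ m ∈ J) (hb : (X - C b) ^ n ∈ J) : a = b := by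
  by_contra hab
  obtain ⟨u, w, huw⟩ := (isCoprime_X_sub_C_of_isUnit_sub (sub_ne_zero.mpr hab).isUnit).pow
    (m := m) (n := n)
  apply hJ
  rw [Ideal.eq_top_iff_one, ← huw]
  exact J.add_mem (J.mul_mem_left u ha) (J.mul_mem_left w hb)

section Forward

variable {K A₁ A₂ : Type*} [Field K] [Ring A₁] [Algebra K A₁] [Ring A₂] [Algebra K A₂]
  {S₁ T₁ : A₁} {S₂ T₂ : A₂} {n : ℕ}

theorem X_sub_C_pow_mem_orderIdeal_of_orderIdeal_le [CharZero K]
    (h : gamma n (S₁ ⊗ₜ[K] (1 : A₂) + (1 : A₁) ⊗ₜ[K] S₂)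
      (T₁ ⊗ₜ[K] (1 : A₂) + (1 : A₁) ⊗ₜ[K] T₂) = 0)
    (c : K) {r : ℕ} (hr : r ≤ n + 1)
    (hI : orderIdeal (genDeriv K S₁ T₁) 1 ≤ Ideal.span {(X + C c) ^ r}) {k : ℕ} (hk : k < r) :
    (X - C c) ^ (n - k) ∈ orderIdeal (genDeriv K S₂ T₂) 1 := by
  rw [← tmul_one_add_one_tmul_shift S₁ S₂ c, gamma_tmul_one_add_one_tmul] at h
  simp_rw [← tmul_smul, gamma_add_smul_one (R := K)] at h
  have hw := TensorProduct.eq_zero_of_sum_range_tmul_eq_zero h hr (fun j hj =>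
    aeval_pow_apply_notMem_span (X_add_C_ne_zero c) (not_isUnit_X_add_C c)
      (hI.trans (Ideal.span_singleton_le_span_singleton.mpr (pow_dvd_pow _ hj)))) k hk
  rwa [← Nat.cast_smul_eq_nsmul K, smul_eq_zero, Nat.cast_eq_zero,
    or_iff_right (Nat.choose_pos (by omega)).ne', gamma_sub_smul_one (R := K),
    ← mem_orderIdeal] at hw

theorem exists_gamma_eq_zero_of_gamma_tmul_one_add_one_tmul_eq_zero [IsAlgClosed K] [CharZero K]
    [Nontrivial A₁] [Nontrivial A₂]
    (h : gamma n (S₁ ⊗ₜ[K] (1 : A₂) + (1 : A₁) ⊗ₜ[K] S₂)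
      (T₁ ⊗ₜ[K] (1 : A₂) + (1 : A₁) ⊗ₜ[K] T₂) = 0) :
    ∃ (l m : ℕ) (lam : K), 0 < l ∧ 0 < m ∧ l + m = n + 1 ∧
      gamma l (S₁ + lam • 1) T₁ = 0 ∧ gamma m (S₂ - lam • 1) T₂ = 0 := by
  set I := orderIdeal (genDeriv K S₁ T₁) 1
  have hJ := X_sub_C_pow_mem_orderIdeal_of_orderIdeal_le h
  have hJ_ne_top : orderIdeal (genDeriv K S₂ T₂) 1 ≠ ⊤ := orderIdeal_ne_top one_ne_zero
  have hI_not_le (c : K) : ¬I ≤ Ideal.span {(X + C c) ^ (n + 1)} := fun hI =>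
    hJ_ne_top ((Ideal.eq_top_iff_one _).mpr (by simpa using hJ c le_rfl hI n.lt_succ_self))
  have huniq (μ ν : K) (hμ : I ≤ Ideal.span {X - C μ}) (hν : I ≤ Ideal.span {X - C ν}) :
      μ = ν := by
    have hμ' := hJ (-μ) (r := 1) (by omega) (by simpa [sub_eq_add_neg] using hμ) one_pos
    have hν' := hJ (-ν) (r := 1) (by omega) (by simpa [sub_eq_add_neg] using hν) one_pos
    exact neg_inj.mp (eq_of_X_sub_C_pow_mem hJ_ne_top hμ' hν')
  obtain ⟨ρ, l, hl, hIρ⟩ := exists_eq_span_X_sub_C_pow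
    (fun hbot => hI_not_le 0 (hbot.le.trans bot_le)) (orderIdeal_ne_top one_ne_zero) huniq
  have hIρ' : I = Ideal.span {(X + C (-ρ)) ^ l} := by simpa [sub_eq_add_neg] using hIρ
  have hln : l ≤ n := by
    by_contra! hnl
    apply hI_not_le (-ρ)
    rw [hIρ', Ideal.span_singleton_le_span_singleton]
    exact pow_dvd_pow _ hnl
  refine ⟨l, n + 1 - l, -ρ, hl, by omega, by omega, ?_, ?_⟩
  · rw [gamma_add_smul_one (R := K), ← mem_orderIdeal]
    exact hIρ'.ge (Ideal.mem_span_singleton_self _)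
  · rw [gamma_sub_smul_one (R := K), ← mem_orderIdeal, show n + 1 - l = n - (l - 1) by omega]
    exact hJ (-ρ) (by omega) hIρ'.le (by omega)

end Forward

theorem gamma_tensor_sum_general
    {A₁ A₂ : Type*} [Ring A₁] [Algebra ℂ A₁] [Ring A₂] [Algebra ℂ A₂]
    (S₁ T₁ : A₁) (S₂ T₂ : A₂)
    (hS₁ : S₁ ≠ 0) (hS₂ : S₂ ≠ 0)
    (n : ℕ) :
    gamma n (S₁ ⊗ₜ[ℂ] (1 : A₂) + (1 : A₁) ⊗ₜ[ℂ] S₂)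
        (T₁ ⊗ₜ[ℂ] (1 : A₂) + (1 : A₁) ⊗ₜ[ℂ] T₂) = 0 ↔
      ∃ (l m : ℕ) (lam : ℂ), 0 < l ∧ 0 < m ∧ l + m = n + 1 ∧
        gamma l (S₁ + lam • 1) T₁ = 0 ∧ gamma m (S₂ - lam • 1) T₂ = 0 := by
  have : Nontrivial A₁ := nontrivial_of_ne S₁ 0 hS₁
  have : Nontrivial A₂ := nontrivial_of_ne S₂ 0 hS₂
  refine ⟨exists_gamma_eq_zero_of_gamma_tmul_one_add_one_tmul_eq_zero, ?_⟩
  rintro ⟨l, m, lam, -, -, hlm, h₁, h₂⟩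
  rw [← tmul_one_add_one_tmul_shift S₁ S₂ lam]
  exact gamma_tmul_one_add_one_tmul_eq_zero hlm.le h₁ h₂

/-- Proposition 6.6: for nonzero `S₁, T₁ ∈ A₁` and `S₂, T₂ ∈ A₂`,
`γ_n(S₁⊗1 + 1⊗S₂, T₁⊗1 + 1⊗T₂) = 0` iff there exist `l, m ≥ 1` with `l + m = n + 1`
and `λ ∈ ℂ` with `γ_l(S₁ + λ·1, T₁) = 0` and `γ_m(S₂ − λ·1, T₂) = 0`. -/
theorem gamma_tensor_sum
    {A₁ A₂ : Type*} [Ring A₁] [Algebra ℂ A₁] [Ring A₂] [Algebra ℂ A₂]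
    (S₁ T₁ : A₁) (S₂ T₂ : A₂)
    (hS₁ : S₁ ≠ 0) (hT₁ : T₁ ≠ 0) (hS₂ : S₂ ≠ 0) (hT₂ : T₂ ≠ 0)
    (n : ℕ) (hn : 1 ≤ n) :
    gamma n (S₁ ⊗ₜ[ℂ] (1 : A₂) + (1 : A₁) ⊗ₜ[ℂ] S₂)
        (T₁ ⊗ₜ[ℂ] (1 : A₂) + (1 : A₁) ⊗ₜ[ℂ] T₂) = 0 ↔
      ∃ (l m : ℕ) (lam : ℂ), 0 < l ∧ 0 < m ∧ l + m = n + 1 ∧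
        gamma l (S₁ + lam • 1) T₁ = 0 ∧ gamma m (S₂ - lam • 1) T₂ = 0 :=
  gamma_tensor_sum_general S₁ T₁ S₂ T₂ hS₁ hS₂ n
end

section
/- Let H be a nonzero complex Hilbert space, T ∈ B(H), λ ∈ ℂ, and n ≥ 1. If γ_n(T* + λI, T − λI) = 0, then λ is purely imaginary (Re λ = 0); consequently T* + λI = (T − λI)*, so T − λI is an n-symmetry. -/
section Algebra

variable {R A : Type*} [CommRing R] [Ring A] [Algebra R A]

theorem gamma_eq_pow_apply_one (n : ℕ) (S T : A) :
    gamma n S T = ((LinearMap.mulLeft R S - LinearMap.mulRight R T) ^ n) 1 := by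
  rw [sub_eq_add_neg, ((LinearMap.commute_mulLeft_right (R := R) S T).neg_right).add_pow,
    LinearMap.sum_apply, gamma]
  refine Finset.sum_congr rfl fun k _ => ?_
  have hneg : (-LinearMap.mulRight R T) ^ (n - k)
      = (-1 : ℤ) ^ (n - k) • LinearMap.mulRight R (T ^ (n - k)) := by
    simp [neg_pow (LinearMap.mulRight R T), LinearMap.pow_mulRight]
  rw [hneg, LinearMap.pow_mulLeft]
  simp only [Module.End.mul_apply, Module.End.natCast_apply, LinearMap.smul_apply,
    LinearMap.mulLeft_apply, LinearMap.mulRight_apply, one_mul, mul_smul_comm, mul_smul,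
    smul_mul_assoc, smul_comm ((-1 : ℤ) ^ (n - k)), natCast_zsmul]

theorem gamma_add_smul_one_add_smul_one_eq_zero_iff (n : ℕ) (S T : A) (a b : R) :
    gamma n (S + a • 1) (T + b • 1) = 0 ↔
      (1 : A) ∈
        Module.End.genEigenspace (LinearMap.mulLeft R S - LinearMap.mulRight R T) (b - a) n := by
  have hshift : LinearMap.mulLeft R (S + a • 1) - LinearMap.mulRight R (T + b • 1)
      = LinearMap.mulLeft R S - LinearMap.mulRight R T - (b - a) • 1 := by
    ext x
    simp only [LinearMap.sub_apply, LinearMap.mulLeft_apply, LinearMap.mulRight_apply,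
      LinearMap.smul_apply, Module.End.one_apply, add_mul, mul_add, smul_mul_assoc,
      mul_smul_comm, one_mul, mul_one, sub_smul]
    abel
  rw [gamma_eq_pow_apply_one (R := R), hshift, Module.End.mem_genEigenspace_nat,
    LinearMap.mem_ker]

end Algebra

theorem sub_eq_sub_of_gamma_eq_zero {k A : Type*} [Field k] [Ring A] [Algebra k A] [Nontrivial A]
    {n : ℕ} {S T : A} {a b a' b' : k} (h : gamma n (S + a • 1) (T + b • 1) = 0)
    (h' : gamma n (S + a' • 1) (T + b' • 1) = 0) : b - a = b' - a' := by
  rw [gamma_add_smul_one_add_smul_one_eq_zero_iff] at h h'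
  by_contra hne
  exact one_ne_zero <| (Submodule.disjoint_def.mp
    (Module.End.disjoint_genEigenspace _ hne n n)) 1 h h'

section Star

variable {A : Type*} [Ring A] [StarRing A]

theorem star_gamma (n : ℕ) (S T : A) :
    star (gamma n S T) = (-1 : ℤ) ^ n • gamma n (star T) (star S) := by
  rw [gamma, gamma, star_sum, Finset.smul_sum, ← Finset.sum_range_reflect]
  refine Finset.sum_congr rfl fun k hk => ?_
  have hk : k ≤ n := Nat.lt_succ_iff.mp (Finset.mem_range.mp hk)
  rw [Nat.add_sub_cancel, Nat.sub_sub_self hk, Nat.choose_symm hk]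
  simp only [star_smul, star_mul, star_pow, star_trivial, smul_smul]
  congr 1
  obtain ⟨j, rfl⟩ := Nat.exists_eq_add_of_le hk
  rw [Nat.add_sub_cancel_left, pow_add, mul_assoc, ← mul_assoc _ _ ((k + j).choose k : ℤ),
    ← mul_pow]
  norm_num

theorem gamma_star_star_eq_zero {n : ℕ} {S T : A} (h : gamma n S T = 0) :
    gamma n (star T) (star S) = 0 := by
  have hstar := congrArg star h
  rw [star_gamma, star_zero] at hstar
  rcases neg_one_pow_eq_or ℤ n with hsign | hsign <;> simpa [hsign] using hstar

end Star

open ComplexConjugate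

theorem purely_imaginary_of_gamma_eq_zero_general
    {H : Type*} [NormedAddCommGroup H] [InnerProductSpace ℂ H] [CompleteSpace H]
    [Nontrivial H] (T : H →L[ℂ] H) (lam : ℂ) (n : ℕ)
    (h : gamma n (ContinuousLinearMap.adjoint T + lam • 1) (T - lam • 1) = 0) :
    lam.re = 0 ∧
    ContinuousLinearMap.adjoint T + lam • 1 = ContinuousLinearMap.adjoint (T - lam • 1) ∧
    gamma n (ContinuousLinearMap.adjoint (T - lam • 1)) (T - lam • 1) = 0 := by
  simp only [← ContinuousLinearMap.star_eq_adjoint] at h ⊢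
  have h₁ : gamma n (star T + lam • 1) (T + (-lam) • 1) = 0 := by
    rwa [neg_smul, ← sub_eq_add_neg]
  have h₂ : gamma n (star T + (-conj lam) • 1) (T + conj lam • 1) = 0 := by
    simpa [sub_eq_add_neg] using gamma_star_star_eq_zero h
  have hconj : conj lam = -lam := by
    linear_combination -(sub_eq_sub_of_gamma_eq_zero h₁ h₂) / 2
  have hadj : star T + lam • 1 = star (T - lam • 1) := by
    simp [hconj, sub_eq_add_neg]
  refine ⟨?_, hadj, hadj ▸ h⟩
  have hre := congrArg Complex.re hconj
  rw [Complex.conj_re, Complex.neg_re] at hre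
  linarith

/-- Lemma 6.7: if `γ_n(T* + λI, T − λI) = 0` on a nonzero complex Hilbert space, then
`λ` is purely imaginary; consequently `T* + λI = (T − λI)*`, so `T − λI` is an
`n`-symmetry. -/
theorem purely_imaginary_of_gamma_eq_zero
    {H : Type*} [NormedAddCommGroup H] [InnerProductSpace ℂ H] [CompleteSpace H]
    [Nontrivial H] (T : H →L[ℂ] H) (lam : ℂ) (n : ℕ) (hn : 1 ≤ n)
    (h : gamma n (ContinuousLinearMap.adjoint T + lam • 1) (T - lam • 1) = 0) :
    lam.re = 0 ∧
    ContinuousLinearMap.adjoint T + lam • 1 = ContinuousLinearMap.adjoint (T - lam • 1) ∧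
    gamma n (ContinuousLinearMap.adjoint (T - lam • 1)) (T - lam • 1) = 0 :=
  purely_imaginary_of_gamma_eq_zero_general T lam n h
end
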